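/- Let A be a finite-dimensional left-symmetric algebra and r ∈ A ⊗ A symmetric. Then r is a solution of the S-equation in A if and only if the induced linear map r : A* → A satisfies [r(a*), r(b*)] = r(L*(r(a*))b* - L*(r(b*))a*) for all a*, b* ∈ A*, i.e., r is an O-operator associated to the dual L* of the left regular representation. -/

import Mathlib

open TensorProduct

variable {F : Type*} [Field F] {A : Type*} [AddCommGroup A] [Module F A]

/-- The linear map A* → A induced by r = Σᵢ aᵢ ⊗ bᵢ ∈ A ⊗ A : r(f) = Σᵢ f(bᵢ) • aᵢ. -/
noncomputable def rOp {n : ℕ} (a b : Fin n → A) : Module.Dual F A →ₗ[F] A :=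
  ∑ i, (LinearMap.applyₗ (b i)).smulRight (a i)

/-!
Write r(f) = Σᵢ f(bᵢ) aᵢ and r̃(f) = Σᵢ f(aᵢ) bᵢ. Contracting the first two legs of the
S-expression against f, g ∈ A*, the bracket term gives [r̃(f), r̃(g)] and the two product terms
give -r̃(f ∘ L_{r(g)}) and r̃(g ∘ L_{r̃(f)}). Symmetry of r means r̃ = r, so the double contraction
is [r(f), r(g)] - r(L*(r(f))g - L*(r(g))f); in finite dimension a tensor vanishes iff all its
contractions do.
-/

section Contraction

variable {R M N : Type*} [CommRing R] [AddCommGroup M] [Module R M] [AddCommGroup N] [Module R N]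

noncomputable def contractFirst : M ⊗[R] N →ₗ[R] Module.Dual R M →ₗ[R] N :=
  dualTensorHom R (Module.Dual R M) N ∘ₗ (Module.Dual.eval R M).rTensor N

@[simp]
lemma contractFirst_tmul (x : M) (y : N) (f : Module.Dual R M) :
    contractFirst (x ⊗ₜ[R] y) f = f x • y := by
  simp [contractFirst]

lemma contractFirst_injective [Module.Finite R M] [Module.Projective R M] :
    Function.Injective (contractFirst : M ⊗[R] N →ₗ[R] Module.Dual R M →ₗ[R] N) :=
  (dualTensorHomEquiv R (Module.Dual R M) N).injective.comp
    ((Module.evalEquiv R M).rTensor N).injective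

lemma eq_zero_of_forall_contractFirst_eq_zero [Module.Finite R M] [Module.Projective R M]
    {t : M ⊗[R] N} (h : ∀ f, contractFirst t f = 0) : t = 0 :=
  contractFirst_injective (by ext1 f; simpa using h f)

end Contraction

section SEquation

variable {n : ℕ}

lemma rOp_apply (a b : Fin n → A) (f : Module.Dual F A) : rOp a b f = ∑ i, f (b i) • a i := by
  simp [rOp]

lemma rOp_eq_contractFirst (a b : Fin n → A) :
    rOp a b = contractFirst (∑ i, b i ⊗ₜ[F] a i) := by
  ext f
  simp [rOp]

lemma rOp_comm_of_symm {a b : Fin n → A} (hsym : ∑ i, a i ⊗ₜ[F] b i = ∑ i, b i ⊗ₜ[F] a i) :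
    rOp (F := F) b a = rOp a b := by
  rw [rOp_eq_contractFirst, rOp_eq_contractFirst, hsym]

variable (mul : A →ₗ[F] A →ₗ[F] A) (a b : Fin n → A) (f g : Module.Dual F A)

lemma contractFirst_r12r13 :
    contractFirst (contractFirst (∑ i, ∑ j, mul (a i) (a j) ⊗ₜ[F] (b i ⊗ₜ[F] b j)) f) g
      = rOp b a ((mul (rOp a b g)).dualMap f) := by
  simp only [rOp_apply, map_sum, map_smul, LinearMap.sum_apply, LinearMap.smul_apply,
    contractFirst_tmul, LinearMap.dualMap_apply, Finset.sum_smul, smul_smul, smul_eq_mul]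
  rw [Finset.sum_comm]
  simp only [mul_comm]

lemma contractFirst_r12r23 :
    contractFirst (contractFirst (∑ i, ∑ j, a i ⊗ₜ[F] (mul (b i) (a j) ⊗ₜ[F] b j)) f) g
      = rOp b a ((mul (rOp b a f)).dualMap g) := by
  simp only [rOp_apply, map_sum, map_smul, LinearMap.sum_apply, LinearMap.smul_apply,
    contractFirst_tmul, LinearMap.dualMap_apply, Finset.sum_smul, smul_smul, smul_eq_mul]
  exact Finset.sum_comm

lemma contractFirst_r13r23 :
    contractFirst (contractFirst
        (∑ i, ∑ j, a i ⊗ₜ[F] (a j ⊗ₜ[F] (mul (b i) (b j) - mul (b j) (b i)))) f) g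
      = mul (rOp b a f) (rOp b a g) - mul (rOp b a g) (rOp b a f) := by
  simp only [rOp_apply, map_sum, map_smul, LinearMap.sum_apply, LinearMap.smul_apply,
    contractFirst_tmul, Finset.smul_sum, smul_sub, Finset.sum_sub_distrib]
  congr 1
  rw [Finset.sum_comm]
  simp only [smul_comm (f _)]

lemma contractFirst_sEquation_of_symm
    (hsym : ∑ i, a i ⊗ₜ[F] b i = ∑ i, b i ⊗ₜ[F] a i) :
    contractFirst (contractFirst
      (-(∑ i, ∑ j, (mul (a i) (a j)) ⊗ₜ[F] ((b i) ⊗ₜ[F] (b j)))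
        + ∑ i, ∑ j, (a i) ⊗ₜ[F] ((mul (b i) (a j)) ⊗ₜ[F] (b j))
        + ∑ i, ∑ j, (a i) ⊗ₜ[F] ((a j) ⊗ₜ[F] (mul (b i) (b j) - mul (b j) (b i)))) f) g
      = (mul (rOp a b f) (rOp a b g) - mul (rOp a b g) (rOp a b f))
        - rOp a b ((-(mul (rOp a b f)).dualMap) g - (-(mul (rOp a b g)).dualMap) f) := by
  simp only [map_add, map_neg, LinearMap.add_apply, LinearMap.neg_apply, contractFirst_r12r13,
    contractFirst_r12r23, contractFirst_r13r23, rOp_comm_of_symm hsym, map_sub]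
  abel

end SEquation

theorem S_equation_iff_O_operator_general [FiniteDimensional F A]
    (mul : A →ₗ[F] A →ₗ[F] A)
    (n : ℕ) (a b : Fin n → A)
    (hsym : ∑ i, a i ⊗ₜ[F] b i = ∑ i, b i ⊗ₜ[F] a i) :
    (-(∑ i, ∑ j, (mul (a i) (a j)) ⊗ₜ[F] ((b i) ⊗ₜ[F] (b j)))
      + ∑ i, ∑ j, (a i) ⊗ₜ[F] ((mul (b i) (a j)) ⊗ₜ[F] (b j))
      + ∑ i, ∑ j, (a i) ⊗ₜ[F] ((a j) ⊗ₜ[F] (mul (b i) (b j) - mul (b j) (b i)))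
      = 0)
    ↔ (∀ f g : Module.Dual F A,
      mul (rOp a b f) (rOp a b g) - mul (rOp a b g) (rOp a b f)
      = rOp a b ((-(mul (rOp a b f)).dualMap) g - (-(mul (rOp a b g)).dualMap) f)) := by
  have hcontract (f g) := contractFirst_sEquation_of_symm mul a b f g hsym
  constructor
  · intro hS f g
    rw [← sub_eq_zero, ← hcontract f g, hS]
    simp
  · intro hO
    refine eq_zero_of_forall_contractFirst_eq_zero fun f => ?_
    refine eq_zero_of_forall_contractFirst_eq_zero fun g => ?_
    rw [hcontract f g, hO f g, sub_self]

/-- A symmetric r is a solution of the S-equation iff r : A* → A is an O-operator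
associated to the dual L* of the left regular representation. -/
theorem S_equation_iff_O_operator [FiniteDimensional F A]
    (mul : A →ₗ[F] A →ₗ[F] A)
    (hls : ∀ x y z : A,
      mul (mul x y) z - mul x (mul y z) = mul (mul y x) z - mul y (mul x z))
    (n : ℕ) (a b : Fin n → A)
    (hsym : ∑ i, a i ⊗ₜ[F] b i = ∑ i, b i ⊗ₜ[F] a i) :
    (-(∑ i, ∑ j, (mul (a i) (a j)) ⊗ₜ[F] ((b i) ⊗ₜ[F] (b j)))
      + ∑ i, ∑ j, (a i) ⊗ₜ[F] ((mul (b i) (a j)) ⊗ₜ[F] (b j))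
      + ∑ i, ∑ j, (a i) ⊗ₜ[F] ((a j) ⊗ₜ[F] (mul (b i) (b j) - mul (b j) (b i)))
      = 0)
    ↔ (∀ f g : Module.Dual F A,
      mul (rOp a b f) (rOp a b g) - mul (rOp a b g) (rOp a b f)
      = rOp a b ((-(mul (rOp a b f)).dualMap) g - (-(mul (rOp a b g)).dualMap) f)) :=
  S_equation_iff_O_operator_general mul n a b hsym
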